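/- Let M ≥ 1 and let A and B be multisets of real numbers, each of cardinality M. If the power sums agree for all degrees 1 ≤ k ≤ M, i.e., ∑_{a ∈ A} a^k = ∑_{b ∈ B} b^k for every k = 1, …, M, then A = B as multisets. (This is the moment/power-sum injectivity lemma used in the proof of the Deep Sets theorem cited by the paper to handle fixed-size multisets of real inputs: the vector of the first M power sums uniquely determines a size-M multiset of reals.) -/

import Mathlib

/-!
Newton's identities express `k • eₖ` through `e₀, …, eₖ₋₁` and the power sums `p₁, …, pₖ`, so
when `R` has no additive torsion the power sums `p₁, …, p_M` of a multiset determine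
`e₀, …, e_M`. For a multiset of cardinality `M` these are, up to sign, the coefficients of the
monic polynomial `∏ (X - a)`, whose multiset of roots is the multiset itself.
-/

open Polynomial Finset

theorem Multiset.mul_esymm_eq_sum {R : Type*} [CommRing R] (s : Multiset R) (k : ℕ) :
    k * s.esymm k = (-1) ^ (k + 1) *
      ∑ a ∈ HasAntidiagonal.antidiagonal k with a.1 < k,
        (-1) ^ a.1 * s.esymm a.1 * (s.map (· ^ a.2)).sum := by
  classical
  obtain ⟨σ, _, f, rfl⟩ : ∃ (σ : Type _) (_ : Fintype σ) (f : σ → R), s = univ.val.map f :=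
    ⟨s, inferInstance, (↑), (Multiset.map_univ_coe s).symm⟩
  have psum_eq (j : ℕ) : MvPolynomial.aeval f (MvPolynomial.psum σ R j) =
      ((univ.val.map f).map (· ^ j)).sum := by
    simp only [MvPolynomial.psum, map_sum, map_pow, MvPolynomial.aeval_X, Multiset.map_map]
    rfl
  have newton := congrArg (MvPolynomial.aeval f) (MvPolynomial.mul_esymm_eq_sum σ R k)
  simpa only [map_mul, map_natCast, map_pow, map_neg, map_one, map_sum, psum_eq,
    MvPolynomial.aeval_esymm_eq_multiset_esymm] using newton

theorem Multiset.esymm_eq_of_sum_pow_eq {R : Type*} [CommRing R] [IsAddTorsionFree R]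
    {s t : Multiset R} {n : ℕ}
    (h : ∀ j, 1 ≤ j → j ≤ n → (s.map (· ^ j)).sum = (t.map (· ^ j)).sum) :
    ∀ k ≤ n, s.esymm k = t.esymm k := by
  intro k
  induction k using Nat.strong_induction_on with
  | _ k ih =>
    intro hk
    rcases k.eq_zero_or_pos with rfl | hk_pos
    · simp [Multiset.esymm]
    · refine (nsmul_right_inj hk_pos.ne').mp ?_
      simp only [nsmul_eq_mul, Multiset.mul_esymm_eq_sum]
      congr 1
      refine Finset.sum_congr rfl fun a ha => ?_
      obtain ⟨hsum, hlt⟩ := Finset.mem_filter.mp ha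
      rw [HasAntidiagonal.mem_antidiagonal] at hsum
      rw [ih a.1 hlt (by omega), h a.2 (by omega) (by omega)]

theorem Multiset.eq_of_esymm_eq {R : Type*} [CommRing R] [IsDomain R] {s t : Multiset R}
    (hcard : Multiset.card s = Multiset.card t)
    (h : ∀ k ≤ Multiset.card s, s.esymm k = t.esymm k) : s = t := by
  have hprod : (s.map fun a => X - C a).prod = (t.map fun a => X - C a).prod := by
    rw [Multiset.prod_X_sub_X_eq_sum_esymm, Multiset.prod_X_sub_X_eq_sum_esymm, ← hcard]
    refine Finset.sum_congr rfl fun k hk => ?_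
    rw [h k (Nat.lt_succ_iff.mp (Finset.mem_range.mp hk))]
  simpa only [roots_multiset_prod_X_sub_C] using congrArg roots hprod

theorem multiset_eq_of_power_sums_eq_general (M : ℕ)
    (A B : Multiset ℝ) (hA : Multiset.card A = M) (hB : Multiset.card B = M)
    (h : ∀ k, 1 ≤ k → k ≤ M →
      (A.map (fun a => a ^ k)).sum = (B.map (fun b => b ^ k)).sum) :
    A = B :=
  Multiset.eq_of_esymm_eq (hA.trans hB.symm) fun k hk =>
    Multiset.esymm_eq_of_sum_pow_eq h k (hA ▸ hk)

/-- A multiset of `M ≥ 1` real numbers is uniquely determined by its first `M`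
power sums. -/
theorem multiset_eq_of_power_sums_eq (M : ℕ) (hM : 1 ≤ M)
    (A B : Multiset ℝ) (hA : Multiset.card A = M) (hB : Multiset.card B = M)
    (h : ∀ k, 1 ≤ k → k ≤ M →
      (A.map (fun a => a ^ k)).sum = (B.map (fun b => b ^ k)).sum) :
    A = B :=
  multiset_eq_of_power_sums_eq_general M A B hA hB h
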